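/- Adopt the Grid setup. There is an absolute constant K₀ (independent of a, b, K, K', and the parameters) such that whenever K' ≥ K₀, for every j ∈ {1,…,K} and l ∈ {1,…,K'}, ∫_a^b |π_{jl}(x) − 1_{(a_{jl}, a_{j(l+1)}]}(x)| dx ≤ 2L/(5K') + L·K·exp(−K'/30) + L·exp(−2K'/3). -/

import Mathlib

open MeasureTheory

noncomputable section

/-- Width `L = (b-a)/K` of the coarse grid. -/
def gL (a b : ℝ) (K : ℕ) : ℝ := (b - a) / K

/-- Left endpoint `a_{jl} = a + (j-1)L + (l-1)L/K'` of the `(j,l)`-th subinterval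
(0-indexed: `j : Fin K`, `l : Fin K'`). -/
def gA (a b : ℝ) (K K' : ℕ) (j : Fin K) (l : Fin K') : ℝ :=
  a + (j : ℕ) * gL a b K + (l : ℕ) * gL a b K / K'

/-- Midpoint `c_{jl}` of the `(j,l)`-th subinterval. -/
def gC (a b : ℝ) (K K' : ℕ) (j : Fin K) (l : Fin K') : ℝ :=
  gA a b K K' j l + gL a b K / (2 * K')

/-- The Gaussian softmax weight `π_{jl}(x)`. -/
def gPi (a b : ℝ) (K K' : ℕ) (μ : Fin K → Fin K' → ℝ) (σ2 : ℝ)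
    (j : Fin K) (l : Fin K') (x : ℝ) : ℝ :=
  Real.exp (-(x - μ j l) ^ 2 / (2 * σ2)) /
    ∑ t : Fin K, ∑ s : Fin K', Real.exp (-(x - μ t s) ^ 2 / (2 * σ2))

end

/-!
Flatten the grid into `N = K K'` consecutive cells of width `h = L / K'` whose centres `ν i` lie
within `h / 6` of the cell midpoints, with `K' σ² ≤ h²`. Write `G v` for the Gaussian weights. On
cell `u` the error `|π_{i₀} - 1_{cell i₀}|` is at most `∑_{v ≠ u} min 1 (G v / G u)` if `u = i₀`
and `min 1 (G i₀ / G u)` otherwise, so the integral is bounded by a sum over `v ≠ i₀` of the two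
cross terms between the cells `i₀` and `v`. For non-adjacent cells the ratio of weights is at most
`exp (-2K'/3)` pointwise. For adjacent cells it is `exp (r (x - q))` with `q` the midpoint of the
two centres, whose integral is at most the distance from `q` to the common cell boundary (`≤ h/6`)
plus `1 / r = σ² / (ν (k+1) - ν k) ≤ 3h / (2K')`. The total `2 (h/6 + 3h/K') + 2 N h exp (-2K'/3)`
is within the claimed bound once `K' ≥ 90`.
-/

open Set Real

lemma integral_min_one_exp_le {r q c d : ℝ} (hr : 0 < r) (hcd : c ≤ d) :
    ∫ x in c..d, min 1 (exp (r * (x - q))) ≤ max 0 (d - q) + 1 / r := by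
  have hcont : Continuous fun x => min 1 (exp (r * (x - q))) := by fun_prop
  have hc : min c q ≤ q := min_le_right c q
  have hd : q ≤ max d q := le_max_right d q
  calc ∫ x in c..d, min 1 (exp (r * (x - q)))
      ≤ ∫ x in min c q..max d q, min 1 (exp (r * (x - q))) :=
        intervalIntegral.integral_mono_interval (min_le_left c q) hcd (le_max_left d q)
          (ae_of_all _ fun x => by positivity) (hcont.intervalIntegrable _ _)
    _ = (∫ x in min c q..q, min 1 (exp (r * (x - q))))
          + ∫ x in q..max d q, min 1 (exp (r * (x - q))) :=
        (intervalIntegral.integral_add_adjacent_intervals (hcont.intervalIntegrable _ _)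
          (hcont.intervalIntegrable _ _)).symm
    _ ≤ (∫ x in min c q..q, exp (r * x - r * q)) + ∫ _ in q..max d q, (1 : ℝ) := by
        gcongr
        · exact intervalIntegral.integral_mono_on hc (hcont.intervalIntegrable _ _)
            ((by fun_prop : Continuous fun x => exp (r * x - r * q)).intervalIntegrable _ _)
            fun x _ => by rw [mul_sub]; exact min_le_right _ _
        · exact intervalIntegral.integral_mono_on hd (hcont.intervalIntegrable _ _)
            intervalIntegrable_const fun x _ => min_le_left _ _
    _ ≤ 1 / r + max 0 (d - q) := by
        rw [intervalIntegral.integral_comp_mul_sub (fun x => exp x) hr.ne', integral_exp]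
        simp only [sub_self, exp_zero, smul_eq_mul, intervalIntegral.integral_const, mul_one]
        gcongr
        · rw [one_div]; nlinarith [exp_pos (r * min c q - r * q), inv_pos.2 hr]
        · rcases le_total d q with h | h <;> simp [h]
    _ = _ := add_comm _ _

lemma integral_min_one_exp_neg_le {r q c d : ℝ} (hr : 0 < r) (hcd : c ≤ d) :
    ∫ x in c..d, min 1 (exp (r * (q - x))) ≤ max 0 (q - c) + 1 / r := by
  have := integral_min_one_exp_le (q := -q) hr (neg_le_neg hcd)
  rw [← intervalIntegral.integral_comp_neg] at this
  simpa [neg_add_eq_sub, sub_eq_add_neg, add_comm] using this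

noncomputable def gaussWeight (σ2 m x : ℝ) : ℝ := exp (-(x - m) ^ 2 / (2 * σ2))

section gaussWeight

variable {σ2 m m₁ m₂ x : ℝ}

lemma gaussWeight_pos : 0 < gaussWeight σ2 m x := exp_pos _

lemma continuous_gaussWeight : Continuous (gaussWeight σ2 m) := by
  unfold gaussWeight; fun_prop

lemma gaussWeight_div_gaussWeight :
    gaussWeight σ2 m₂ x / gaussWeight σ2 m₁ x = exp ((m₂ - m₁) / σ2 * (x - (m₁ + m₂) / 2)) := by
  rw [gaussWeight, gaussWeight, ← exp_sub]
  ring_nf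

lemma gaussWeight_div_le_exp {M h : ℝ} (hσ : 0 < σ2) (hh : 0 ≤ h) (hM : M * σ2 ≤ h ^ 2)
    (h₁ : |x - m₁| ≤ 2 * h / 3) (h₂ : 4 * h / 3 ≤ |x - m₂|) :
    gaussWeight σ2 m₂ x / gaussWeight σ2 m₁ x ≤ exp (-(2 * M / 3)) := by
  rw [gaussWeight, gaussWeight, ← exp_sub, exp_le_exp, ← sub_div, div_le_iff₀ (by positivity)]
  have hsq₁ : (x - m₁) ^ 2 ≤ (2 * h / 3) ^ 2 := sq_le_sq' (abs_le.1 h₁).1 (abs_le.1 h₁).2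
  have hsq₂ : (4 * h / 3) ^ 2 ≤ (x - m₂) ^ 2 := by
    rw [← sq_abs (x - m₂)]; exact pow_le_pow_left₀ (by positivity) h₂ 2
  nlinarith

lemma integral_min_one_gaussWeight_div_add_le {c p d : ℝ} (hσ : 0 < σ2) (hm : m₁ < m₂)
    (hcp : c ≤ p) (hpd : p ≤ d) :
    (∫ x in Ioc c p, min 1 (gaussWeight σ2 m₂ x / gaussWeight σ2 m₁ x))
      + ∫ x in Ioc p d, min 1 (gaussWeight σ2 m₁ x / gaussWeight σ2 m₂ x)
      ≤ |p - (m₁ + m₂) / 2| + 2 * (σ2 / (m₂ - m₁)) := by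
  set r := (m₂ - m₁) / σ2
  set q := (m₁ + m₂) / 2
  have hr : 0 < r := div_pos (sub_pos.2 hm) hσ
  have hswap : ∀ x, gaussWeight σ2 m₁ x / gaussWeight σ2 m₂ x = exp (r * (q - x)) := by
    intro x; rw [gaussWeight_div_gaussWeight]; congr 1; ring
  simp only [gaussWeight_div_gaussWeight, hswap, ← intervalIntegral.integral_of_le hcp,
    ← intervalIntegral.integral_of_le hpd]
  have := add_le_add (integral_min_one_exp_le (q := q) hr hcp)
    (integral_min_one_exp_neg_le (q := q) hr hpd)
  rw [one_div_div] at this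
  rcases le_total p q with h | h
  · rw [max_eq_left (sub_nonpos.2 h), max_eq_right (sub_nonneg.2 h)] at this
    rw [abs_of_nonpos (sub_nonpos.2 h)]
    linarith
  · rw [max_eq_right (sub_nonneg.2 h), max_eq_left (sub_nonpos.2 h)] at this
    rw [abs_of_nonneg (sub_nonneg.2 h)]
    linarith

end gaussWeight

section softmax

variable {ι : Type*} {s : Finset ι} {w : ι → ℝ} {i u : ι}

lemma div_sum_le_min_one_div (hw : ∀ v ∈ s, 0 < w v) (hi : i ∈ s) (hu : u ∈ s) :
    w i / ∑ v ∈ s, w v ≤ min 1 (w i / w u) := by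
  have hle : ∀ v ∈ s, w v ≤ ∑ v ∈ s, w v := fun v hv =>
    Finset.single_le_sum (fun v hv => (hw v hv).le) hv
  exact le_min ((div_le_one (Finset.sum_pos hw ⟨u, hu⟩)).2 (hle i hi))
    (div_le_div_of_nonneg_left (hw i hi).le (hw u hu) (hle u hu))

lemma one_sub_div_sum_le [DecidableEq ι] (hw : ∀ v ∈ s, 0 < w v) (hu : u ∈ s) :
    1 - w u / ∑ v ∈ s, w v ≤ ∑ v ∈ s.erase u, min 1 (w v / w u) := by
  have hS : ∑ v ∈ s, w v ≠ 0 := (Finset.sum_pos hw ⟨u, hu⟩).ne'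
  calc 1 - w u / ∑ v ∈ s, w v = ∑ v ∈ s.erase u, w v / ∑ v ∈ s, w v := by
        rw [← Finset.sum_div, eq_div_iff hS, sub_mul, one_mul, div_mul_cancel₀ _ hS,
          ← Finset.add_sum_erase s w hu, add_sub_cancel_left]
    _ ≤ ∑ v ∈ s.erase u, min 1 (w v / w u) :=
        Finset.sum_le_sum fun v hv => div_sum_le_min_one_div hw (Finset.mem_of_mem_erase hv) hu

end softmax

def gridCell (a h : ℝ) (u : ℕ) : Set ℝ := Ioc (a + u * h) (a + u * h + h)

def CentersNearMidpoints (a h : ℝ) (ν : ℕ → ℝ) : Prop :=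
  ∀ i : ℕ, |ν i - (a + (i + 1 / 2) * h)| ≤ h / 6

section grid

variable {a h : ℝ} {ν : ℕ → ℝ} {x : ℝ} {u v : ℕ}

lemma eq_of_mem_gridCell (hh : 0 < h) (hu : x ∈ gridCell a h u) (hv : x ∈ gridCell a h v) :
    u = v := by
  have key : ∀ {u v : ℕ}, x ∈ gridCell a h u → x ∈ gridCell a h v → u ≤ v := by
    intro u v hu hv
    have : (u : ℝ) * h < (v + 1) * h := by linarith [hu.1, hv.2]
    exact Nat.lt_succ_iff.1 (by exact_mod_cast lt_of_mul_lt_mul_right this hh.le)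
  exact le_antisymm (key hu hv) (key hv hu)

lemma abs_sub_le_of_mem_gridCell (hν : CentersNearMidpoints a h ν) (hx : x ∈ gridCell a h u) :
    |x - ν u| ≤ 2 * h / 3 := by
  have := abs_le.1 (hν u)
  exact abs_le.2 ⟨by linarith [hx.1], by linarith [hx.2]⟩

lemma le_abs_sub_of_mem_gridCell (hν : CentersNearMidpoints a h ν) (hh : 0 ≤ h)
    (hx : x ∈ gridCell a h u) (huv : v + 2 ≤ u ∨ u + 2 ≤ v) : 4 * h / 3 ≤ |x - ν v| := by
  have := abs_le.1 (hν v)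
  rcases huv with huv | huv
  · have : ((v : ℝ) + 2) * h ≤ u * h := by gcongr; exact_mod_cast huv
    exact le_abs.2 (Or.inl (by linarith [hx.1]))
  · have : ((u : ℝ) + 2) * h ≤ v * h := by gcongr; exact_mod_cast huv
    exact le_abs.2 (Or.inr (by linarith [hx.2]))

lemma two_mul_div_three_le_sub_succ (hν : CentersNearMidpoints a h ν)
    (k : ℕ) : 2 * h / 3 ≤ ν (k + 1) - ν k := by
  have h₁ := abs_le.1 (hν k)
  have h₂ := abs_le.1 (hν (k + 1))
  push_cast at h₂
  linarith [h₁.2, h₂.1]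

lemma abs_sub_midpoint_succ_le (hν : CentersNearMidpoints a h ν) (k : ℕ) :
    |a + (k + 1 : ℕ) * h - (ν k + ν (k + 1)) / 2| ≤ h / 6 := by
  have h₁ := abs_le.1 (hν k)
  have h₂ := abs_le.1 (hν (k + 1))
  push_cast at h₂ ⊢
  exact abs_le.2 ⟨by linarith, by linarith⟩

end grid

section gridIntegrals

variable {a h σ2 M : ℝ} {ν : ℕ → ℝ}

lemma setIntegral_Ioc_eq_sum_gridCell {f : ℝ → ℝ} (hh : 0 ≤ h)
    (hf : ∀ u, IntegrableOn f (gridCell a h u)) (N : ℕ) :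
    ∫ x in Ioc a (a + N * h), f x = ∑ u ∈ Finset.range N, ∫ x in gridCell a h u, f x := by
  have hstep : ∀ u : ℕ, a + ((u + 1 : ℕ) : ℝ) * h = a + u * h + h := fun u => by push_cast; ring
  have hle : ∀ u : ℕ, a + u * h ≤ a + u * h + h := fun u => by linarith
  have hsum := intervalIntegral.sum_integral_adjacent_intervals (f := f) (μ := volume)
    (a := fun u : ℕ => a + u * h) (n := N) fun u _ => by
      rw [hstep, intervalIntegrable_iff_integrableOn_Ioc_of_le (hle u)]; exact hf u
  simp only [hstep, intervalIntegral.integral_of_le (hle _), CharP.cast_eq_zero, zero_mul,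
    add_zero] at hsum
  rw [← intervalIntegral.integral_of_le (le_add_of_nonneg_right (by positivity)), ← hsum]
  rfl

lemma volume_real_gridCell (hh : 0 ≤ h) {u : ℕ} : volume.real (gridCell a h u) = h := by
  rw [gridCell, Real.volume_real_Ioc_of_le (by linarith), add_sub_cancel_left]

lemma integral_gridCell_le_of_far (hh : 0 ≤ h) (hσ : 0 < σ2) (hM : M * σ2 ≤ h ^ 2)
    (hν : CentersNearMidpoints a h ν) {u v : ℕ}
    (huv : v + 2 ≤ u ∨ u + 2 ≤ v) :
    ∫ x in gridCell a h u, min 1 (gaussWeight σ2 (ν v) x / gaussWeight σ2 (ν u) x)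
      ≤ h * exp (-(2 * M / 3)) := by
  have hbound := norm_setIntegral_le_of_norm_le_const (μ := volume) (s := gridCell a h u)
    measure_Ioc_lt_top (C := exp (-(2 * M / 3)))
    (f := fun x => min 1 (gaussWeight σ2 (ν v) x / gaussWeight σ2 (ν u) x)) fun x hx => by
      rw [Real.norm_of_nonneg (le_min zero_le_one (div_pos gaussWeight_pos gaussWeight_pos).le)]
      exact (min_le_right _ _).trans (gaussWeight_div_le_exp hσ hh hM
        (abs_sub_le_of_mem_gridCell hν hx) (le_abs_sub_of_mem_gridCell hν hh hx huv))
  rw [volume_real_gridCell hh, Real.norm_eq_abs] at hbound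
  linarith [le_abs_self (∫ x in gridCell a h u,
    min 1 (gaussWeight σ2 (ν v) x / gaussWeight σ2 (ν u) x))]

lemma integral_gridCell_add_integral_gridCell_succ_le (hh : 0 < h) (hσ : 0 < σ2) (hM0 : 0 < M)
    (hM : M * σ2 ≤ h ^ 2) (hν : CentersNearMidpoints a h ν) (k : ℕ) :
    (∫ x in gridCell a h k, min 1 (gaussWeight σ2 (ν (k + 1)) x / gaussWeight σ2 (ν k) x))
      + ∫ x in gridCell a h (k + 1), min 1 (gaussWeight σ2 (ν k) x / gaussWeight σ2 (ν (k + 1)) x)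
      ≤ h / 6 + 3 * h / M := by
  have hΔ := two_mul_div_three_le_sub_succ hν k
  have hp : a + k * h + h = a + (k + 1 : ℕ) * h := by push_cast; ring
  have hratio : σ2 / (ν (k + 1) - ν k) ≤ 3 * h / (2 * M) := by
    rw [div_le_div_iff₀ (by linarith) (by positivity)]; nlinarith
  have := integral_min_one_gaussWeight_div_add_le (m₁ := ν k) (m₂ := ν (k + 1))
    (c := a + k * h) (p := a + (k + 1 : ℕ) * h) (d := a + (k + 1 : ℕ) * h + h) hσ (by linarith) (by linarith) (by linarith)
  rw [gridCell, gridCell, hp]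
  have htwice : 2 * (3 * h / (2 * M)) = 3 * h / M := by field_simp
  linarith [abs_sub_midpoint_succ_le hν k]

lemma integral_gridCell_add_integral_gridCell_le (hh : 0 < h) (hσ : 0 < σ2) (hM0 : 0 < M)
    (hM : M * σ2 ≤ h ^ 2) (hν : CentersNearMidpoints a h ν) {u v : ℕ}
    (huv : u ≠ v) :
    (∫ x in gridCell a h u, min 1 (gaussWeight σ2 (ν v) x / gaussWeight σ2 (ν u) x))
      + ∫ x in gridCell a h v, min 1 (gaussWeight σ2 (ν u) x / gaussWeight σ2 (ν v) x)
      ≤ if u + 1 = v ∨ v + 1 = u then h / 6 + 3 * h / M else 2 * h * exp (-(2 * M / 3)) := by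
  split_ifs with hadj
  · rcases hadj with rfl | rfl
    · exact integral_gridCell_add_integral_gridCell_succ_le hh hσ hM0 hM hν u
    · rw [add_comm]; exact integral_gridCell_add_integral_gridCell_succ_le hh hσ hM0 hM hν v
  · have := integral_gridCell_le_of_far hh.le hσ hM hν (u := u) (v := v) (by omega)
    have := integral_gridCell_le_of_far hh.le hσ hM hν (u := v) (v := u) (by omega)
    linarith

end gridIntegrals

lemma sum_ite_adjacent_le (s : Finset ℕ) (i : ℕ) {A B : ℝ} (hA : 0 ≤ A) (hB : 0 ≤ B) :
    ∑ v ∈ s, (if i + 1 = v ∨ v + 1 = i then A else B) ≤ 2 * A + s.card * B := by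
  rw [Finset.sum_ite, Finset.sum_const, Finset.sum_const, nsmul_eq_mul, nsmul_eq_mul]
  have hadj : (s.filter fun v => i + 1 = v ∨ v + 1 = i).card ≤ 2 :=
    (Finset.card_le_card (t := {i + 1, i - 1}) fun v hv => by
      have := (Finset.mem_filter.1 hv).2
      simp only [Finset.mem_insert, Finset.mem_singleton]
      omega).trans Finset.card_le_two
  have hrest : (s.filter fun v => ¬(i + 1 = v ∨ v + 1 = i)).card ≤ s.card :=
    Finset.card_filter_le _ _
  exact add_le_add (mul_le_mul_of_nonneg_right (by exact_mod_cast hadj) hA)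
    (mul_le_mul_of_nonneg_right (by exact_mod_cast hrest) hB)

lemma two_mul_exp_neg_le {M : ℝ} (hM : 2 ≤ M) : 2 * exp (-(2 * M / 3)) ≤ exp (-M / 30) := by
  have : 2 ≤ exp (19 * M / 30) := by linarith [add_one_le_exp (19 * M / 30)]
  calc 2 * exp (-(2 * M / 3)) ≤ exp (19 * M / 30) * exp (-(2 * M / 3)) := by gcongr
    _ = exp (-M / 30) := by rw [← exp_add]; ring_nf

open Finset in
lemma integral_abs_softmax_sub_indicator_le_sum {a h σ2 : ℝ} {ν : ℕ → ℝ} {N i₀ : ℕ}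
    (hh : 0 < h) (hi₀ : i₀ < N) :
    ∫ x in Ioc a (a + N * h),
      |gaussWeight σ2 (ν i₀) x / ∑ i ∈ range N, gaussWeight σ2 (ν i) x
        - (gridCell a h i₀).indicator (fun _ => (1 : ℝ)) x|
      ≤ ∑ v ∈ (range N).erase i₀,
          ((∫ x in gridCell a h i₀, min 1 (gaussWeight σ2 (ν v) x / gaussWeight σ2 (ν i₀) x))
            + ∫ x in gridCell a h v, min 1 (gaussWeight σ2 (ν i₀) x / gaussWeight σ2 (ν v) x)) := by
  set f := fun x => |gaussWeight σ2 (ν i₀) x / ∑ i ∈ range N, gaussWeight σ2 (ν i) x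
    - (gridCell a h i₀).indicator (fun _ => (1 : ℝ)) x|
  set g := fun u v x => min 1 (gaussWeight σ2 (ν v) x / gaussWeight σ2 (ν u) x)
  have hpos : ∀ x, ∀ v ∈ range N, 0 < gaussWeight σ2 (ν v) x := fun _ _ _ => gaussWeight_pos
  have hi₀N : i₀ ∈ range N := mem_range.2 hi₀
  have hf_int : ∀ u, IntegrableOn f (gridCell a h u) := fun u =>
    (((continuous_gaussWeight.div (continuous_finsetSum _ fun i _ => continuous_gaussWeight)
      fun x => (sum_pos (hpos x) ⟨i₀, hi₀N⟩).ne').integrableOn_Ioc).sub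
      ((integrableOn_const measure_Ioc_lt_top.ne (C := (1 : ℝ))).indicator measurableSet_Ioc)).abs
  have hg_int : ∀ u v, IntegrableOn (g u v) (gridCell a h u) := fun u v =>
    (continuous_const.min (continuous_gaussWeight.div continuous_gaussWeight
      fun x => gaussWeight_pos.ne')).integrableOn_Ioc
  have h_own : ∫ x in gridCell a h i₀, f x
      ≤ ∑ v ∈ (range N).erase i₀, ∫ x in gridCell a h i₀, g i₀ v x := by
    rw [← integral_finsetSum _ fun v _ => hg_int i₀ v]
    refine setIntegral_mono_on (hf_int i₀) (integrable_finsetSum _ fun v _ => hg_int i₀ v)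
      measurableSet_Ioc fun x hx => ?_
    have hπ : gaussWeight σ2 (ν i₀) x / ∑ i ∈ range N, gaussWeight σ2 (ν i) x ≤ 1 :=
      (div_sum_le_min_one_div (hpos x) hi₀N hi₀N).trans (min_le_left _ _)
    simp only [f, g]
    rw [indicator_of_mem hx, abs_sub_comm, abs_of_nonneg (sub_nonneg.2 hπ)]
    exact one_sub_div_sum_le (hpos x) hi₀N
  have h_other : ∀ u ∈ (range N).erase i₀,
      ∫ x in gridCell a h u, f x ≤ ∫ x in gridCell a h u, g u i₀ x := by
    intro u hu
    refine setIntegral_mono_on (hf_int u) (hg_int u i₀) measurableSet_Ioc fun x hx => ?_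
    simp only [f, g]
    rw [indicator_of_notMem fun hx' => (ne_of_mem_erase hu) (eq_of_mem_gridCell hh hx hx'),
      sub_zero, abs_of_nonneg (div_pos gaussWeight_pos (sum_pos (hpos x) ⟨i₀, hi₀N⟩)).le]
    exact div_sum_le_min_one_div (hpos x) hi₀N (mem_of_mem_erase hu)
  rw [setIntegral_Ioc_eq_sum_gridCell hh.le hf_int N, ← add_sum_erase _ _ hi₀N, sum_add_distrib]
  exact add_le_add h_own (sum_le_sum h_other)

open Finset in
theorem integral_abs_softmax_sub_indicator_le {a h σ2 M : ℝ} {ν : ℕ → ℝ} {N i₀ : ℕ}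
    (hh : 0 < h) (hσ : 0 < σ2) (hM90 : 90 ≤ M) (hM : M * σ2 ≤ h ^ 2)
    (hν : CentersNearMidpoints a h ν) (hi₀ : i₀ < N) :
    ∫ x in Ioc a (a + N * h),
      |gaussWeight σ2 (ν i₀) x / ∑ i ∈ range N, gaussWeight σ2 (ν i) x
        - (gridCell a h i₀).indicator (fun _ => (1 : ℝ)) x|
      ≤ 2 * h / 5 + N * h * exp (-M / 30) := by
  calc _ ≤ _ := integral_abs_softmax_sub_indicator_le_sum hh hi₀
    _ ≤ ∑ v ∈ (range N).erase i₀,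
          (if i₀ + 1 = v ∨ v + 1 = i₀ then h / 6 + 3 * h / M else 2 * h * exp (-(2 * M / 3))) :=
        sum_le_sum fun v hv => integral_gridCell_add_integral_gridCell_le hh hσ (by linarith) hM hν
          (ne_of_mem_erase hv).symm
    _ ≤ 2 * (h / 6 + 3 * h / M) + N * (2 * h * exp (-(2 * M / 3))) := by
        refine (sum_ite_adjacent_le _ _ (by positivity) (by positivity)).trans ?_
        gcongr
        exact_mod_cast (card_erase_le).trans (card_range N).le
    _ ≤ 2 * h / 5 + N * h * exp (-M / 30) := by
        have h3M : 3 * h / M ≤ h / 30 := by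
          rw [div_le_div_iff₀ (by linarith) (by norm_num)]; nlinarith
        have := two_mul_exp_neg_le (M := M) (by linarith)
        have : (N : ℝ) * h * (2 * exp (-(2 * M / 3))) ≤ N * h * exp (-M / 30) := by gcongr
        linarith

section reindex

variable {a b : ℝ} {K K' : ℕ}

lemma gA_eq (hK' : K' ≠ 0) (j : Fin K) (l : Fin K') :
    gA a b K K' j l = a + ((finProdFinEquiv (j, l) : ℕ) : ℝ) * (gL a b K / K') := by
  rw [gA, finProdFinEquiv_apply_val]
  push_cast
  field_simp
  ring

lemma gC_eq (hK' : K' ≠ 0) (j : Fin K) (l : Fin K') :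
    gC a b K K' j l = a + (((finProdFinEquiv (j, l) : ℕ) : ℝ) + 1 / 2) * (gL a b K / K') := by
  rw [gC, gA_eq hK']
  field_simp
  ring

lemma add_mul_gL_div_eq (hK : K ≠ 0) (hK' : K' ≠ 0) :
    a + ((K * K' : ℕ) : ℝ) * (gL a b K / K') = b := by
  rw [gL]
  push_cast
  field_simp
  ring

/-- Past the grid the centres are the exact midpoints, so that `CentersNearMidpoints` holds at
every index. -/
noncomputable def flatCenters (a w : ℝ) (μ : Fin K → Fin K' → ℝ) (i : ℕ) : ℝ :=
  if hi : i < K * K' then μ (finProdFinEquiv.symm ⟨i, hi⟩).1 (finProdFinEquiv.symm ⟨i, hi⟩).2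
  else a + (i + 1 / 2) * w

variable {w : ℝ} {μ : Fin K → Fin K' → ℝ}

lemma flatCenters_finProdFinEquiv (j : Fin K) (l : Fin K') :
    flatCenters a w μ (finProdFinEquiv (j, l)) = μ j l := by
  rw [flatCenters, dif_pos (finProdFinEquiv (j, l)).isLt, Fin.eta, Equiv.symm_apply_apply]

lemma sum_sum_eq_sum_range_flatCenters (F : ℝ → ℝ) :
    ∑ t : Fin K, ∑ s : Fin K', F (μ t s)
      = ∑ i ∈ Finset.range (K * K'), F (flatCenters a w μ i) := by
  rw [← Fin.sum_univ_eq_sum_range, ← Fintype.sum_prod_type',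
    ← finProdFinEquiv.sum_comp]
  exact Finset.sum_congr rfl fun ⟨j, l⟩ _ => by rw [flatCenters_finProdFinEquiv]

lemma centersNearMidpoints_flatCenters (hL : 0 ≤ gL a b K) (hK' : K' ≠ 0)
    (hμ : ∀ j l, |μ j l - gC a b K K' j l| ≤ gL a b K / (6 * K')) :
    CentersNearMidpoints a (gL a b K / K') (flatCenters a (gL a b K / K') μ) := by
  intro i
  by_cases hi : i < K * K'
  · obtain ⟨⟨j, l⟩, rfl⟩ : ∃ p, (finProdFinEquiv p : ℕ) = i :=
      ⟨_, congrArg Fin.val (finProdFinEquiv.apply_symm_apply ⟨i, hi⟩)⟩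
    rw [flatCenters_finProdFinEquiv, ← gC_eq hK', div_div, mul_comm (K' : ℝ)]
    exact hμ j l
  · rw [flatCenters, dif_neg hi, sub_self, abs_zero]
    positivity

lemma gPi_eq_div_sum_flatCenters (j : Fin K) (l : Fin K') (σ2 x : ℝ) :
    gPi a b K K' μ σ2 j l x = gaussWeight σ2 (μ j l) x
      / ∑ i ∈ Finset.range (K * K'), gaussWeight σ2 (flatCenters a w μ i) x :=
  congrArg _ (sum_sum_eq_sum_range_flatCenters (fun m => gaussWeight σ2 m x))

end reindex

theorem stmt8 :
    ∃ K₀ : ℕ, ∀ (a b : ℝ), a < b → ∀ (K K' : ℕ), 0 < K → 0 < K' → K₀ ≤ K' →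
      ∀ (μ : Fin K → Fin K' → ℝ),
        (∀ j l, |μ j l - gC a b K K' j l| ≤ gL a b K / (6 * K')) →
      ∀ σ2 : ℝ, gL a b K ^ 2 / (2 * (K' : ℝ) ^ 3) ≤ σ2 →
        σ2 ≤ gL a b K ^ 2 / (K' : ℝ) ^ 3 →
      ∀ (j : Fin K) (l : Fin K'),
        (∫ x in Set.Ioc a b,
          |gPi a b K K' μ σ2 j l x -
            Set.indicator (Set.Ioc (gA a b K K' j l) (gA a b K K' j l + gL a b K / K'))
              (fun _ => (1 : ℝ)) x|)
          ≤ 2 * gL a b K / (5 * K') + gL a b K * K * Real.exp (-(K' : ℝ) / 30)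
            + gL a b K * Real.exp (-(2 * (K' : ℝ)) / 3) := by
  refine ⟨90, fun a b hab K K' hK hK' hK₀ μ hμ σ2 hσlo hσhi j l => ?_⟩
  have hL : 0 < gL a b K := div_pos (sub_pos.2 hab) (by exact_mod_cast hK)
  set w := gL a b K / K'
  have hw : 0 < w := div_pos hL (by exact_mod_cast hK')
  have hσ : 0 < σ2 := lt_of_lt_of_le (by positivity) hσlo
  have hσM : (K' : ℝ) * σ2 ≤ w ^ 2 := by
    calc (K' : ℝ) * σ2 ≤ K' * (gL a b K ^ 2 / (K' : ℝ) ^ 3) := by gcongr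
      _ = (gL a b K / K') ^ 2 := by field_simp
  have key := integral_abs_softmax_sub_indicator_le (ν := flatCenters a w μ) (N := K * K')
    (i₀ := finProdFinEquiv (j, l)) hw hσ (by exact_mod_cast hK₀) hσM
    (centersNearMidpoints_flatCenters hL.le hK'.ne' hμ) (finProdFinEquiv (j, l)).isLt
  rw [add_mul_gL_div_eq hK.ne' hK'.ne', gridCell, ← gA_eq hK'.ne'] at key
  simp only [flatCenters_finProdFinEquiv] at key
  simp only [gPi_eq_div_sum_flatCenters (w := w)]
  refine key.trans ?_
  have hNw : ((K * K' : ℕ) : ℝ) * w = gL a b K * K := by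
    simp only [w]; push_cast; field_simp
  have hw5 : 2 * w / 5 = 2 * gL a b K / (5 * K') := by simp only [w]; ring
  rw [hNw, hw5]
  have : 0 ≤ gL a b K * Real.exp (-(2 * (K' : ℝ)) / 3) := by positivity
  linarith
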